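/- For every annotated value v there exists a distinctly-colored annotated value v₀ with |v₀| = |v| and a color substitution α₀ such that α₀(v₀) = v. (Here the colors are drawn from a countably infinite set.) -/

import Mathlib

abbrev Color := ℕ

mutual
inductive RVal : Type where
  | int : ℤ → RVal
  | bool : Bool → RVal
  | pair : AVal → AVal → RVal
  | coll : List AVal → RVal
inductive AVal : Type where
  | ann : RVal → Set Color → AVal
end

inductive Val : Type where
  | int : ℤ → Val
  | bool : Bool → Val
  | pair : Val → Val → Val
  | coll : List Val → Val

mutual
def eraseA : AVal → Val
  | .ann w _ => eraseR w
def eraseR : RVal → Val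
  | .int i => .int i
  | .bool b => .bool b
  | .pair v₁ v₂ => .pair (eraseA v₁) (eraseA v₂)
  | .coll vs => .coll (eraseList vs)
def eraseList : List AVal → List Val
  | [] => []
  | v :: vs => eraseA v :: eraseList vs
end

mutual
def colorsA : AVal → Set Color
  | .ann w Φ => Φ ∪ colorsR w
def colorsR : RVal → Set Color
  | .int _ => ∅
  | .bool _ => ∅
  | .pair v₁ v₂ => colorsA v₁ ∪ colorsA v₂
  | .coll vs => colorsList vs
def colorsList : List AVal → Set Color
  | [] => ∅
  | v :: vs => colorsA v ∪ colorsList vs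
end

def substSet (α : Color → Set Color) (Φ : Set Color) : Set Color := ⋃ c ∈ Φ, α c

mutual
def substA (α : Color → Set Color) : AVal → AVal
  | .ann w Φ => .ann (substR α w) (substSet α Φ)
def substR (α : Color → Set Color) : RVal → RVal
  | .int i => .int i
  | .bool b => .bool b
  | .pair v₁ v₂ => .pair (substA α v₁) (substA α v₂)
  | .coll vs => .coll (substList α vs)
def substList (α : Color → Set Color) : List AVal → List AVal
  | [] => []
  | v :: vs => substA α v :: substList α vs
end

-- Distinctly-colored: every annotation a singleton, no color used twice.
mutual
def DistA : AVal → Prop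
  | .ann w Φ => (∃ c, Φ = {c}) ∧ Φ ∩ colorsR w = ∅ ∧ DistR w
def DistR : RVal → Prop
  | .int _ => True
  | .bool _ => True
  | .pair v₁ v₂ => DistA v₁ ∧ DistA v₂ ∧ colorsA v₁ ∩ colorsA v₂ = ∅
  | .coll vs => DistList vs
def DistList : List AVal → Prop
  | [] => True
  | v :: vs => DistA v ∧ DistList vs ∧ colorsA v ∩ colorsList vs = ∅
end

-- "Equal except at c"
mutual
inductive EqExA (c : Color) : AVal → AVal → Prop where
  | same : ∀ {w₁ w₂ : RVal} {Φ : Set Color}, EqExR c w₁ w₂ → EqExA c (.ann w₁ Φ) (.ann w₂ Φ)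
  | escape : ∀ {w₁ w₂ : RVal} {Φ₁ Φ₂ : Set Color}, c ∈ Φ₁ → c ∈ Φ₂ → EqExA c (.ann w₁ Φ₁) (.ann w₂ Φ₂)
inductive EqExR (c : Color) : RVal → RVal → Prop where
  | int : ∀ i : ℤ, EqExR c (.int i) (.int i)
  | bool : ∀ b : Bool, EqExR c (.bool b) (.bool b)
  | pair : ∀ {v₁ v₂ v₁' v₂' : AVal}, EqExA c v₁ v₁' → EqExA c v₂ v₂' → EqExR c (.pair v₁ v₂) (.pair v₁' v₂')
  | coll : ∀ {vs vs' : List AVal}, EqExL c vs vs' → EqExR c (.coll vs) (.coll vs')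
inductive EqExL (c : Color) : List AVal → List AVal → Prop where
  | nil : EqExL c [] []
  | cons : ∀ {v v' : AVal} {vs vs' : List AVal}, EqExA c v v' → EqExL c vs vs' → EqExL c (v :: vs) (v' :: vs')
end

inductive Ty : Type where
  | int : Ty
  | bool : Ty
  | pair : Ty → Ty → Ty
  | coll : Ty → Ty

inductive HasTy : Val → Ty → Prop where
  | int : ∀ i : ℤ, HasTy (.int i) .int
  | bool : ∀ b : Bool, HasTy (.bool b) .bool
  | pair : ∀ {v₁ v₂ t₁ t₂}, HasTy v₁ t₁ → HasTy v₂ t₂ → HasTy (.pair v₁ v₂) (.pair t₁ t₂)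
  | coll : ∀ {vs t}, (∀ v ∈ vs, HasTy v t) → HasTy (.coll vs) (.coll t)

/-- v is an annotated value of (ordinary) type τ. -/
def ATyped (v : AVal) (t : Ty) : Prop := HasTy (eraseA v) t

/-- Add an annotation set to the top-level annotation. -/
def addTop (v : AVal) (Φ : Set Color) : AVal :=
  match v with
  | .ann w Ψ => .ann w (Ψ ∪ Φ)

/- Annotated types -/
mutual
inductive ATy : Type where
  | ann : RTy → Set Color → ATy
inductive RTy : Type where
  | int : RTy
  | bool : RTy
  | pair : ATy → ATy → RTy
  | coll : ATy → RTy
end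

mutual
def teraseA : ATy → Ty
  | .ann w _ => teraseR w
def teraseR : RTy → Ty
  | .int => .int
  | .bool => .bool
  | .pair t₁ t₂ => .pair (teraseA t₁) (teraseA t₂)
  | .coll t => .coll (teraseA t)
end

mutual
def tcolorsA : ATy → Set Color
  | .ann w Φ => Φ ∪ tcolorsR w
def tcolorsR : RTy → Set Color
  | .int => ∅
  | .bool => ∅
  | .pair t₁ t₂ => tcolorsA t₁ ∪ tcolorsA t₂
  | .coll t => tcolorsA t
end

mutual
def mergeA : ATy → ATy → ATy
  | .ann w₁ Φ₁, .ann w₂ Φ₂ => .ann (mergeR w₁ w₂) (Φ₁ ∪ Φ₂)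
def mergeR : RTy → RTy → RTy
  | .int, .int => .int
  | .bool, .bool => .bool
  | .pair a b, .pair a' b' => .pair (mergeA a a') (mergeA b b')
  | .coll a, .coll a' => .coll (mergeA a a')
  | w, _ => w
end

-- Semantics of annotated types: v ∈ A[τ̂].
mutual
def memA : AVal → ATy → Prop
  | .ann w Ψ, .ann ω Φ => Ψ ⊆ Φ ∧ memR w ω
def memR : RVal → RTy → Prop
  | .int _, .int => True
  | .bool _, .bool => True
  | .pair v₁ v₂, .pair t₁ t₂ => memA v₁ t₁ ∧ memA v₂ t₂
  | .coll vs, .coll t => memList vs t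
  | _, _ => False
def memList : List AVal → ATy → Prop
  | [], _ => True
  | v :: vs, t => memA v t ∧ memList vs t
end


/-!
Give every annotation position its own fresh color, handing disjoint intervals of `ℕ` to
disjoint subtrees; `α₀` sends each fresh color back to the annotation it replaced. Keeping track
of the interval `[n, m)` that contains the colors of an enrichment makes both the distinctness
and the gluing of the substitutions found for subtrees immediate.
-/

theorem substSet_congr {α β : Color → Set Color} {Φ : Set Color} (h : Set.EqOn α β Φ) :
    substSet α Φ = substSet β Φ :=
  Set.iUnion₂_congr h

theorem substSet_singleton (α : Color → Set Color) (c : Color) : substSet α {c} = α c := by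
  simp [substSet]

mutual
theorem substA_congr {α β : Color → Set Color} :
    ∀ {v : AVal}, Set.EqOn α β (colorsA v) → substA α v = substA β v
  | .ann _ _, h => by
    rw [substA, substA, substR_congr (h.mono Set.subset_union_right),
      substSet_congr (h.mono Set.subset_union_left)]
theorem substR_congr {α β : Color → Set Color} :
    ∀ {w : RVal}, Set.EqOn α β (colorsR w) → substR α w = substR β w
  | .int _, _ | .bool _, _ => rfl
  | .pair _ _, h => by
    rw [substR, substR, substA_congr (h.mono Set.subset_union_left),
      substA_congr (h.mono Set.subset_union_right)]
  | .coll _, h => by rw [substR, substR, substList_congr h]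
theorem substList_congr {α β : Color → Set Color} :
    ∀ {vs : List AVal}, Set.EqOn α β (colorsList vs) → substList α vs = substList β vs
  | [], _ => rfl
  | _ :: _, h => by
    rw [substList, substList, substA_congr (h.mono Set.subset_union_left),
      substList_congr (h.mono Set.subset_union_right)]
end

theorem inter_eq_empty_of_subset_Ico {C₁ C₂ : Set Color} {n m₁ m₂ : Color}
    (h₁ : C₁ ⊆ Set.Ico n m₁) (h₂ : C₂ ⊆ Set.Ico m₁ m₂) : C₁ ∩ C₂ = ∅ :=
  Set.disjoint_iff_inter_eq_empty.mp (Set.Ico_disjoint_Ico_same.mono h₁ h₂)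

theorem union_subset_Ico {C₁ C₂ : Set Color} {n m₁ m₂ : Color} (hm₁ : n ≤ m₁) (hm₂ : m₁ ≤ m₂)
    (h₁ : C₁ ⊆ Set.Ico n m₁) (h₂ : C₂ ⊆ Set.Ico m₁ m₂) : C₁ ∪ C₂ ⊆ Set.Ico n m₂ :=
  Set.Ico_union_Ico_eq_Ico hm₁ hm₂ ▸ Set.union_subset_union h₁ h₂

theorem piecewise_Iio_eqOn_left {C : Set Color} {n m : Color} (α₁ α₂ : Color → Set Color)
    (h : C ⊆ Set.Ico n m) : Set.EqOn ((Set.Iio m).piecewise α₁ α₂) α₁ C :=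
  ((Set.Iio m).piecewise_eqOn α₁ α₂).mono (h.trans Set.Ico_subset_Iio_self)

theorem piecewise_Iio_eqOn_right {C : Set Color} {m m' : Color} (α₁ α₂ : Color → Set Color)
    (h : C ⊆ Set.Ico m m') : Set.EqOn ((Set.Iio m).piecewise α₁ α₂) α₂ C :=
  ((Set.Iio m).piecewise_eqOn_compl α₁ α₂).mono (Set.compl_Iio (a := m) ▸ h.trans Set.Ico_subset_Ici_self)

mutual
theorem exists_enrichmentA_Ico (v : AVal) (n : Color) :
    ∃ (v₀ : AVal) (m : Color) (α : Color → Set Color), n ≤ m ∧ colorsA v₀ ⊆ Set.Ico n m ∧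
      DistA v₀ ∧ eraseA v₀ = eraseA v ∧ substA α v₀ = v := by
  obtain ⟨w, Φ⟩ := v
  obtain ⟨w₀, m, α, hm, hcol, hdist, herase, hsubst⟩ := exists_enrichmentR_Ico w (n + 1)
  have hn : n ∉ colorsR w₀ := fun hc => (Set.mem_Ico.mp (hcol hc)).1.not_gt n.lt_succ_self
  refine ⟨.ann w₀ {n}, m, Function.update α n Φ, n.le_succ.trans hm, ?_, ⟨⟨n, rfl⟩, ?_, hdist⟩, herase, ?_⟩
  · exact Set.union_subset (by simpa using hm) (hcol.trans (Set.Ico_subset_Ico_left n.le_succ))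
  · exact Set.singleton_inter_eq_empty.mpr hn
  · have hα : Set.EqOn (Function.update α n Φ) α (colorsR w₀) := fun c hc =>
      Function.update_of_ne (ne_of_mem_of_not_mem hc hn) _ _
    rw [substA, substR_congr hα, hsubst, substSet_singleton, Function.update_self]
theorem exists_enrichmentR_Ico (w : RVal) (n : Color) :
    ∃ (w₀ : RVal) (m : Color) (α : Color → Set Color), n ≤ m ∧ colorsR w₀ ⊆ Set.Ico n m ∧
      DistR w₀ ∧ eraseR w₀ = eraseR w ∧ substR α w₀ = w := by
  cases w with
  | int i => exact ⟨.int i, n, fun _ => ∅, le_rfl, Set.empty_subset _, trivial, rfl, rfl⟩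
  | bool b => exact ⟨.bool b, n, fun _ => ∅, le_rfl, Set.empty_subset _, trivial, rfl, rfl⟩
  | pair v₁ v₂ =>
    obtain ⟨u₁, m₁, α₁, hm₁, hcol₁, hd₁, her₁, hs₁⟩ := exists_enrichmentA_Ico v₁ n
    obtain ⟨u₂, m₂, α₂, hm₂, hcol₂, hd₂, her₂, hs₂⟩ := exists_enrichmentA_Ico v₂ m₁
    refine ⟨.pair u₁ u₂, m₂, (Set.Iio m₁).piecewise α₁ α₂, hm₁.trans hm₂,
      union_subset_Ico hm₁ hm₂ hcol₁ hcol₂, ⟨hd₁, hd₂, inter_eq_empty_of_subset_Ico hcol₁ hcol₂⟩,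
      by rw [eraseR, eraseR, her₁, her₂], ?_⟩
    rw [substR, substA_congr (piecewise_Iio_eqOn_left α₁ α₂ hcol₁),
      substA_congr (piecewise_Iio_eqOn_right α₁ α₂ hcol₂), hs₁, hs₂]
  | coll vs =>
    obtain ⟨vs₀, m, α, hm, hcol, hd, her, hs⟩ := exists_enrichmentList_Ico vs n
    exact ⟨.coll vs₀, m, α, hm, hcol, hd, by rw [eraseR, eraseR, her], by rw [substR, hs]⟩
theorem exists_enrichmentList_Ico (vs : List AVal) (n : Color) :
    ∃ (vs₀ : List AVal) (m : Color) (α : Color → Set Color), n ≤ m ∧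
      colorsList vs₀ ⊆ Set.Ico n m ∧ DistList vs₀ ∧ eraseList vs₀ = eraseList vs ∧
      substList α vs₀ = vs := by
  cases vs with
  | nil => exact ⟨[], n, fun _ => ∅, le_rfl, Set.empty_subset _, trivial, rfl, rfl⟩
  | cons v vs =>
    obtain ⟨u, m₁, α₁, hm₁, hcol₁, hd₁, her₁, hs₁⟩ := exists_enrichmentA_Ico v n
    obtain ⟨us, m₂, α₂, hm₂, hcol₂, hd₂, her₂, hs₂⟩ := exists_enrichmentList_Ico vs m₁
    refine ⟨u :: us, m₂, (Set.Iio m₁).piecewise α₁ α₂, hm₁.trans hm₂,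
      union_subset_Ico hm₁ hm₂ hcol₁ hcol₂, ⟨hd₁, hd₂, inter_eq_empty_of_subset_Ico hcol₁ hcol₂⟩,
      by rw [eraseList, eraseList, her₁, her₂], ?_⟩
    rw [substList, substA_congr (piecewise_Iio_eqOn_left α₁ α₂ hcol₁),
      substList_congr (piecewise_Iio_eqOn_right α₁ α₂ hcol₂), hs₁, hs₂]
end

theorem exists_distinct_enrichment (v : AVal) :
    ∃ (v₀ : AVal) (α₀ : Color → Set Color),
      DistA v₀ ∧ eraseA v₀ = eraseA v ∧ substA α₀ v₀ = v := by
  obtain ⟨v₀, -, α₀, -, -, hdist, herase, hsubst⟩ := exists_enrichmentA_Ico v 0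
  exact ⟨v₀, α₀, hdist, herase, hsubst⟩
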